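/- Let f∈C([0,1]), h:ℝ→ℝ continuous and bounded with primitive H, and g_0:ℝ→ℝ continuous with finite limit g_0(+∞):=lim_{u→+∞}g_0(u); set g(u)=(1+|u|)g_0(u). For the sequence u_k(t)=k on [1/2,1/2+1/k], 0 elsewhere, and y_k its primitive with y_k(0)=0, one has lim_{k→∞} ∫_0^1 f(t) g(u_k(t)) h(y_k(t)) dt = ∫_0^{1/2} f(t) g(0) h(0) dt + ∫_{1/2}^1 f(t) g(0) h(1) dt + f(1/2) g_0(+∞) (H(1)−H(0)). -/

import Mathlib

open MeasureTheory Filter Set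

/-- Control spike of height `k` on `[1/2, 1/2 + 1/k]`. -/
noncomputable def uSpike (k : ℕ) (t : ℝ) : ℝ :=
  if t ∈ Set.Icc (1 / 2 : ℝ) (1 / 2 + 1 / k) then (k : ℝ) else 0

noncomputable def ySpike (k : ℕ) (t : ℝ) : ℝ := ∫ s in (0:ℝ)..t, uSpike k s

/-!
Off the spike the control vanishes and the state is `0` before `1/2` and `1` after
`1/2 + 1/k`, so those two pieces converge to the regular integrals. On the spike the state is
`k (t - 1/2)`, and the substitution `s = k (t - 1/2)` turns that piece into
`g(k)/k · ∫₀¹ f(1/2 + s/k) h(s) ds`; here `g(k)/k → g₀(+∞)` and the integral tends to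
`f(1/2) ∫₀¹ h = f(1/2) (H 1 - H 0)`.
-/

open Topology

theorem ContinuousOn.exists_continuous_eqOn_Icc {a b : ℝ} {f : ℝ → ℝ} (hab : a ≤ b)
    (hf : ContinuousOn f (Icc a b)) : ∃ F : ℝ → ℝ, Continuous F ∧ EqOn F f (Icc a b) :=
  ⟨IccExtend hab ((Icc a b).domRestrict f),
    (continuousOn_iff_continuous_domRestrict.mp hf).Icc_extend',
    fun _ hx => IccExtend_of_mem hab _ hx⟩

theorem tendsto_one_add_abs_mul_div_atTop {g : ℝ → ℝ} {l : ℝ} (hg : Tendsto g atTop (𝓝 l)) :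
    Tendsto (fun u => (1 + |u|) * g u / u) atTop (𝓝 l) := by
  have hlim : Tendsto (fun u : ℝ => (u⁻¹ + 1) * g u) atTop (𝓝 ((0 + 1) * l)) :=
    (tendsto_inv_atTop_zero.add_const 1).mul hg
  rw [zero_add, one_mul] at hlim
  refine hlim.congr' ?_
  filter_upwards [eventually_gt_atTop 0] with u hu
  rw [abs_of_pos hu]
  field_simp

namespace intervalIntegral

theorem integral_eq_add_add_of_eqOn_Ioo {E : Type*} [NormedAddCommGroup E] [NormedSpace ℝ E]
    {F G₁ G₂ G₃ : ℝ → E} {a b c d : ℝ} (hab : a ≤ b) (hbc : b ≤ c) (hcd : c ≤ d)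
    (h₁ : EqOn F G₁ (Ioo a b)) (h₂ : EqOn F G₂ (Ioo b c)) (h₃ : EqOn F G₃ (Ioo c d))
    (hG₁ : IntervalIntegrable G₁ volume a b) (hG₂ : IntervalIntegrable G₂ volume b c)
    (hG₃ : IntervalIntegrable G₃ volume c d) :
    ∫ x in a..d, F x = (∫ x in a..b, G₁ x) + (∫ x in b..c, G₂ x) + ∫ x in c..d, G₃ x := by
  have hF₁ := hG₁.congr_uIoo (uIoo_of_le hab ▸ h₁.symm)
  have hF₂ := hG₂.congr_uIoo (uIoo_of_le hbc ▸ h₂.symm)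
  have hF₃ := hG₃.congr_uIoo (uIoo_of_le hcd ▸ h₃.symm)
  rw [← integral_add_adjacent_intervals (hF₁.trans hF₂) hF₃,
    ← integral_add_adjacent_intervals hF₁ hF₂, integral_congr_Ioo_of_le hab h₁,
    integral_congr_Ioo_of_le hbc h₂, integral_congr_Ioo_of_le hcd h₃]

theorem integral_mul_comp_mul_sub {φ ψ : ℝ → ℝ} {c : ℝ} (hc : c ≠ 0) (a : ℝ) :
    ∫ t in a..a + 1 / c, φ t * ψ (c * (t - a)) = c⁻¹ * ∫ s in 0..1, φ (a + s / c) * ψ s := by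
  have := integral_comp_add_div (a := 0) (b := 1) (fun t => φ t * ψ (c * (t - a))) hc a
  simp only [zero_div, add_zero, add_sub_cancel_left, mul_div_cancel₀ _ hc, smul_eq_mul] at this
  rw [this, inv_mul_cancel_left₀ hc]

theorem tendsto_integral_comp_add_div_natCast {φ ψ : ℝ → ℝ} (hφ : Continuous φ)
    (hψ : Continuous ψ) (a b₀ b₁ : ℝ) :
    Tendsto (fun k : ℕ => ∫ s in b₀..b₁, φ (a + s / k) * ψ s) atTop
      (𝓝 (φ a * ∫ s in b₀..b₁, ψ s)) := by
  have hcont : Continuous fun x : ℝ => ∫ s in b₀..b₁, φ (a + s * x) * ψ s := by fun_prop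
  have := (hcont.tendsto 0).comp tendsto_inv_atTop_nhds_zero_nat
  simpa [Function.comp_def, div_eq_mul_inv, integral_const_mul] using this

end intervalIntegral

theorem uSpike_of_lt {k : ℕ} {t : ℝ} (ht : t < 1 / 2) : uSpike k t = 0 :=
  if_neg fun h => ht.not_ge h.1

theorem uSpike_of_gt {k : ℕ} {t : ℝ} (ht : 1 / 2 + 1 / k < t) : uSpike k t = 0 :=
  if_neg fun h => ht.not_ge h.2

theorem uSpike_of_mem {k : ℕ} {t : ℝ} (ht : t ∈ Icc (1 / 2 : ℝ) (1 / 2 + 1 / k)) :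
    uSpike k t = k :=
  if_pos ht

theorem ySpike_eq {k : ℕ} {t : ℝ} (ht : 0 ≤ t) :
    ySpike k t = k * max (min t (1 / 2 + 1 / k) - 1 / 2) 0 := by
  have hset : Ioc 0 t ∩ Icc (1 / 2 : ℝ) (1 / 2 + 1 / k) = Icc (1 / 2) (min t (1 / 2 + 1 / k)) := by
    ext x
    simp only [mem_inter_iff, mem_Ioc, mem_Icc, le_min_iff]
    constructor
    · rintro ⟨⟨-, hxt⟩, hx, hxk⟩; exact ⟨hx, hxt, hxk⟩
    · rintro ⟨hx, hxt, hxk⟩; exact ⟨⟨by linarith, hxt⟩, hx, hxk⟩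
  have hu : uSpike k = (Icc (1 / 2 : ℝ) (1 / 2 + 1 / k)).indicator fun _ => (k : ℝ) := by
    funext s; simp [uSpike, indicator_apply]
  rw [ySpike, intervalIntegral.integral_of_le ht, hu, setIntegral_indicator measurableSet_Icc,
    hset, setIntegral_const, measureReal_def, Real.volume_Icc, smul_eq_mul, mul_comm,
    ENNReal.toReal_ofReal']

theorem ySpike_of_le {k : ℕ} {t : ℝ} (ht₀ : 0 ≤ t) (ht : t ≤ 1 / 2) : ySpike k t = 0 := by
  rw [ySpike_eq ht₀, max_eq_right (by linarith [min_le_left t (1 / 2 + 1 / k : ℝ)]), mul_zero]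

theorem ySpike_of_mem {k : ℕ} {t : ℝ} (ht : t ∈ Icc (1 / 2 : ℝ) (1 / 2 + 1 / k)) :
    ySpike k t = k * (t - 1 / 2) := by
  rw [ySpike_eq (by linarith [ht.1]), min_eq_left ht.2, max_eq_left (by linarith [ht.1])]

theorem ySpike_of_ge {k : ℕ} (hk : k ≠ 0) {t : ℝ} (ht : 1 / 2 + 1 / k ≤ t) : ySpike k t = 1 := by
  have hk' : (0 : ℝ) < k := by positivity
  rw [ySpike_eq (by linarith [one_div_pos.mpr hk']), min_eq_right ht,
    add_sub_cancel_left, max_eq_left (by positivity), mul_one_div_cancel hk'.ne']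

theorem integral_spike_eq {f h G : ℝ → ℝ} (hf : Continuous f) (hh : Continuous h) {k : ℕ}
    (hk : 2 ≤ k) :
    ∫ t in (0 : ℝ)..1, f t * G (uSpike k t) * h (ySpike k t) =
      (∫ t in (0 : ℝ)..1 / 2, f t * G 0 * h 0) +
        G k * ((k : ℝ)⁻¹ * ∫ s in (0 : ℝ)..1, f (1 / 2 + s / k) * h s) +
        ∫ t in 1 / 2 + 1 / (k : ℝ)..1, f t * G 0 * h 1 := by
  have hk₀ : (k : ℝ) ≠ 0 := by positivity
  have hb : (1 / 2 : ℝ) ≤ 1 / 2 + 1 / k := by simp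
  have hb₁ : 1 / 2 + 1 / (k : ℝ) ≤ 1 := by
    have : 1 / (k : ℝ) ≤ 1 / 2 := one_div_le_one_div_of_le two_pos (by exact_mod_cast hk)
    linarith
  rw [intervalIntegral.integral_eq_add_add_of_eqOn_Ioo (by norm_num) hb hb₁
    (G₁ := fun t => f t * G 0 * h 0) (G₂ := fun t => G k * (f t * h (k * (t - 1 / 2))))
    (G₃ := fun t => f t * G 0 * h 1) ?below ?during ?after ?_ ?_ ?_,
    intervalIntegral.integral_const_mul, intervalIntegral.integral_mul_comp_mul_sub hk₀]
  case below => exact fun t ht => by simp only [uSpike_of_lt ht.2, ySpike_of_le ht.1.le ht.2.le]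
  case during =>
    intro t ht
    simp only [uSpike_of_mem ⟨ht.1.le, ht.2.le⟩, ySpike_of_mem ⟨ht.1.le, ht.2.le⟩]
    ring
  case after =>
    exact fun t ht => by simp only [uSpike_of_gt ht.1, ySpike_of_ge (by positivity) ht.1.le]
  all_goals exact (by fun_prop : Continuous _).intervalIntegrable _ _

theorem tendsto_integral_spike {f h G : ℝ → ℝ} {L : ℝ} (hf : Continuous f) (hh : Continuous h)
    (hG : Tendsto (fun u => G u / u) atTop (𝓝 L)) :
    Tendsto (fun k : ℕ => ∫ t in (0 : ℝ)..1, f t * G (uSpike k t) * h (ySpike k t)) atTop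
      (𝓝 ((∫ t in (0 : ℝ)..1 / 2, f t * G 0 * h 0) + L * (f (1 / 2) * ∫ s in (0 : ℝ)..1, h s) +
        ∫ t in (1 / 2 : ℝ)..1, f t * G 0 * h 1)) := by
  have hrate : Tendsto (fun k : ℕ => G k / k) atTop (𝓝 L) := hG.comp tendsto_natCast_atTop_atTop
  have hprofile := intervalIntegral.tendsto_integral_comp_add_div_natCast hf hh (1 / 2) 0 1
  have hright : Tendsto (fun k : ℕ => ∫ t in 1 / 2 + 1 / (k : ℝ)..1, f t * G 0 * h 1) atTop
      (𝓝 (∫ t in (1 / 2 : ℝ)..1, f t * G 0 * h 1)) := by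
    have hcont : Continuous fun x => ∫ t in x..1, f t * G 0 * h 1 :=
      (show Continuous fun x => -∫ t in (1 : ℝ)..x, f t * G 0 * h 1 by fun_prop).congr
        fun x => (intervalIntegral.integral_symm _ _).symm
    have hb : Tendsto (fun k : ℕ => 1 / 2 + 1 / (k : ℝ)) atTop (𝓝 (1 / 2)) := by
      simpa using tendsto_const_nhds.add (tendsto_one_div_atTop_nhds_zero_nat (𝕜 := ℝ))
    exact (hcont.tendsto _).comp hb
  refine ((tendsto_const_nhds.add (hrate.mul hprofile)).add hright).congr' ?_
  filter_upwards [eventually_ge_atTop 2] with k hk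
  rw [integral_spike_eq (G := G) hf hh hk]
  ring

theorem anisotropic_limit_single_spike_general
    (f h H g₀ : ℝ → ℝ) (g₀inf : ℝ)
    (hf : ContinuousOn f (Set.Icc 0 1))
    (hh : Continuous h)
    (hH : ∀ x, HasDerivAt H (h x) x)
    (hg₀inf : Tendsto g₀ atTop (nhds g₀inf)) :
    Tendsto (fun k : ℕ =>
        ∫ t in (0:ℝ)..1, f t * ((1 + |uSpike k t|) * g₀ (uSpike k t)) * h (ySpike k t))
      atTop
      (nhds ((∫ t in (0:ℝ)..(1/2), f t * ((1 + |(0:ℝ)|) * g₀ 0) * h 0) +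
             (∫ t in (1/2:ℝ)..1, f t * ((1 + |(0:ℝ)|) * g₀ 0) * h 1) +
             f (1 / 2) * g₀inf * (H 1 - H 0))) := by
  obtain ⟨F, hF, hFf⟩ := hf.exists_continuous_eqOn_Icc zero_le_one
  have hcongr {a b : ℝ} (ha : a ∈ Icc (0 : ℝ) 1) (hb : b ∈ Icc (0 : ℝ) 1) (φ ψ : ℝ → ℝ) :
      ∫ t in a..b, F t * φ t * ψ t = ∫ t in a..b, f t * φ t * ψ t :=
    intervalIntegral.integral_congr fun t ht => by rw [hFf (uIcc_subset_Icc ha hb ht)]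
  have h₀ : (0 : ℝ) ∈ Icc (0 : ℝ) 1 := left_mem_Icc.mpr zero_le_one
  have h₁ : (1 : ℝ) ∈ Icc (0 : ℝ) 1 := right_mem_Icc.mpr zero_le_one
  have hhalf : (1 / 2 : ℝ) ∈ Icc (0 : ℝ) 1 := ⟨by norm_num, by norm_num⟩
  have hlim := tendsto_integral_spike (G := fun u => (1 + |u|) * g₀ u) hF hh
    (tendsto_one_add_abs_mul_div_atTop hg₀inf)
  rw [intervalIntegral.integral_eq_sub_of_hasDerivAt (fun x _ => hH x) (hh.intervalIntegrable 0 1),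
    hFf hhalf] at hlim
  simp only [hcongr h₀ h₁, hcongr h₀ hhalf, hcongr hhalf h₁] at hlim
  convert hlim using 2
  ring

theorem anisotropic_limit_single_spike
    (f h H g₀ : ℝ → ℝ) (g₀inf : ℝ) (M : ℝ)
    (hf : ContinuousOn f (Set.Icc 0 1))
    (hh : Continuous h) (hhbd : ∀ y, |h y| ≤ M)
    (hH : ∀ x, HasDerivAt H (h x) x)
    (hg₀ : Continuous g₀) (hg₀inf : Tendsto g₀ atTop (nhds g₀inf)) :
    Tendsto (fun k : ℕ =>
        ∫ t in (0:ℝ)..1, f t * ((1 + |uSpike k t|) * g₀ (uSpike k t)) * h (ySpike k t))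
      atTop
      (nhds ((∫ t in (0:ℝ)..(1/2), f t * ((1 + |(0:ℝ)|) * g₀ 0) * h 0) +
             (∫ t in (1/2:ℝ)..1, f t * ((1 + |(0:ℝ)|) * g₀ 0) * h 1) +
             f (1 / 2) * g₀inf * (H 1 - H 0))) :=
  anisotropic_limit_single_spike_general f h H g₀ g₀inf hf hh hH hg₀inf
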